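/- Let Π be the simple roots of a reduced root system R, Π_r = {α ∈ Π : f_α ∈ Λ_r}, Π' = Π \ Π_r, and let R' be the root system with simple roots the images α' of α ∈ Π' in V' = V/span{f_α : α ∈ Π_r}. Define s: Λ_w∨ → Λ'_w∨ by s(x) = x − Σ_{α∈Π_r} ⟨x, f_α⟩ α∨ (this lies in Λ'_w∨), and t: Λ'_w → Λ_w by t(f'_α) = d_α f_α for α ∈ Π'. Then the image of t∘φ'∘s − φ is contained in the root lattice Λ_r, where φ and φ' are the canonical maps from coweight to weight lattices for R and R' respectively. -/

import Mathlib

/-!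
Expand vectors in the fundamental weights, `v = Σ_{α ∈ Π} ⟨α∨, v⟩ f_α`; modulo `Λ_r` the terms
with `α ∈ Π_r` drop out as soon as their coefficients are integers. As `⟨α∨, φ x⟩ = d_α ⟨x, α⟩`,
this gives `φ x ≡ Σ_{α ∈ Π'} ⟨x, α⟩ d_α f_α`; as `d_α ⟨β∨, α⟩ = d_β ⟨α∨, β⟩`, expanding
`d_β β ∈ Λ_r` gives `Σ_{α ∈ Π'} ⟨β∨, α⟩ d_α f_α ∈ Λ_r`. The difference in the theorem is the first
congruence minus a combination of the second ones with the integer coefficients `⟨x, f_β⟩`.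

All coefficients are integral because `d_α ∈ ℤ`: `d_α |α|²` is constant on a component, so `d_α`
is the ratio of the longest root length of the component to `|α|²`, an integer by the usual
Cartan-integer argument.
-/

open Module

/-- A reduced root system `R` in a real vector space `V`, together with the
`Aut(R)`-invariant inner products on `V` and on `V* = Dual ℝ V`. -/
structure RootSystemData (V : Type) [AddCommGroup V] [Module ℝ V] : Type where
  /-- the (finite) set of roots -/
  roots : Finset V
  /-- the coroot `α∨ ∈ V*` attached to a root `α` -/
  coroot : V → Module.Dual ℝ V
  span_eq_top : Submodule.span ℝ (roots : Set V) = ⊤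
  root_ne_zero : ∀ α ∈ roots, α ≠ (0 : V)
  coroot_self : ∀ α ∈ roots, coroot α α = 2
  reflect_mem : ∀ α ∈ roots, ∀ β ∈ roots, β - coroot α β • α ∈ roots
  crystallographic : ∀ α ∈ roots, ∀ β ∈ roots, ∃ n : ℤ, coroot α β = (n : ℝ)
  reduced : ∀ α ∈ roots, ∀ t : ℝ, t • α ∈ roots → t = 1 ∨ t = -1
  /-- the `Aut(R)`-invariant inner product on `V` -/
  B : V →ₗ[ℝ] V →ₗ[ℝ] ℝ
  B_symm : ∀ x y, B x y = B y x
  B_pos : ∀ x, x ≠ 0 → 0 < B x x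
  B_invariant : ∀ σ : V ≃ₗ[ℝ] V, (∀ α ∈ roots, σ α ∈ roots) →
    ∀ α ∈ roots, ∀ β ∈ roots, B (σ α) (σ β) = B α β
  coroot_eq : ∀ α ∈ roots, ∀ x : V, coroot α x = 2 * B α x / B α α
  /-- the `Aut(R)`-invariant inner product on `V*` (for the dual root system `R∨`) -/
  Bd : Module.Dual ℝ V →ₗ[ℝ] Module.Dual ℝ V →ₗ[ℝ] ℝ
  Bd_symm : ∀ x y, Bd x y = Bd y x
  Bd_pos : ∀ x, x ≠ 0 → 0 < Bd x x
  /-- the coroot of `α∨` in the dual root system `R∨` is evaluation at `α` -/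
  dual_coroot_eq : ∀ α ∈ roots, ∀ y : Module.Dual ℝ V,
    y α = 2 * Bd (coroot α) y / Bd (coroot α) (coroot α)

namespace RootSystemData

variable {V : Type} [AddCommGroup V] [Module ℝ V] (D : RootSystemData V)

/-- `x` and `y` lie in the same irreducible component of the root system. -/
def SameComponent (x y : V) : Prop :=
  Relation.ReflTransGen (fun a b => a ∈ D.roots ∧ b ∈ D.roots ∧ D.B a b ≠ 0) x y

/-- `R` is irreducible. -/
def IsIrreducible : Prop :=
  D.roots.Nonempty ∧ ∀ α ∈ D.roots, ∀ β ∈ D.roots, D.SameComponent α β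

/-- `R` is simply laced: all roots have the same length. -/
def IsSimplyLaced : Prop := ∀ α ∈ D.roots, ∀ β ∈ D.roots, D.B α α = D.B β β

/-- `α` is a root that is short within its irreducible component. -/
def ShortRoot (α : V) : Prop :=
  α ∈ D.roots ∧ ∀ β ∈ D.roots, D.SameComponent α β → D.B α α ≤ D.B β β

/-- `α∨` is a coroot that is short within its irreducible component of `R∨`
(equivalently, `α` is a long root of its component). -/
def ShortCoroot (α : V) : Prop :=
  α ∈ D.roots ∧ ∀ β ∈ D.roots, D.SameComponent α β →
    D.Bd (D.coroot α) (D.coroot α) ≤ D.Bd (D.coroot β) (D.coroot β)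

/-- normalization: short roots in every irreducible component have square-length `1`. -/
def NormalizedPrimal : Prop := ∀ α, D.ShortRoot α → D.B α α = 1

/-- normalization: short coroots in every irreducible component have square-length `1`. -/
def NormalizedDual : Prop := ∀ α, D.ShortCoroot α → D.Bd (D.coroot α) (D.coroot α) = 1

/-- the weight lattice `Λ_w ⊆ V`. -/
def weightLattice : Set V := {x | ∀ α ∈ D.roots, ∃ n : ℤ, D.coroot α x = (n : ℝ)}

/-- the root lattice `Λ_r ⊆ V`. -/
def rootLattice : AddSubgroup V := AddSubgroup.closure (D.roots : Set V)

/-- the coweight lattice `Λ_w∨ ⊆ V*`. -/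
def coweightLattice : Set (Module.Dual ℝ V) := {x | ∀ α ∈ D.roots, ∃ n : ℤ, x α = (n : ℝ)}

/-- the coroot lattice `Λ_r∨ ⊆ V*`. -/
def corootLattice : AddSubgroup (Module.Dual ℝ V) :=
  AddSubgroup.closure (D.coroot '' (D.roots : Set V))

end RootSystemData

open scoped Classical

lemma smul_mem_of_mem_range_intCast {V : Type} [AddCommGroup V] [Module ℝ V] {L : AddSubgroup V}
    {c : ℝ} (hc : c ∈ (Int.castRingHom ℝ).range) {v : V} (hv : v ∈ L) : c • v ∈ L := by
  obtain ⟨n, rfl⟩ := hc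
  simpa only [eq_intCast, Int.cast_smul_eq_zsmul] using zsmul_mem hv n

/-- `m n < 4` and `m² ≤ m n` force `m = ±1`, whence `p / q = m n`. -/
lemma div_mem_range_intCast_of_mul_eq_two_mul {p q b : ℝ} {m n : ℤ} (hq : 0 < q) (hb : b ≠ 0)
    (hqp : q ≤ p) (hcs : b * b < p * q) (hm : m * p = 2 * b) (hn : n * q = 2 * b) :
    p / q ∈ (Int.castRingHom ℝ).range := by
  have hp : 0 < p := hq.trans_le hqp
  have hmn : (m * n : ℝ) * (p * q) = 4 * (b * b) := by
    linear_combination n * q * hm + 2 * b * hn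
  have hsq : (m * m : ℝ) * p = (m * n) * q := by linear_combination m * hm - m * hn
  have hmn_lt : (m * n : ℝ) < 4 := by nlinarith [mul_pos hp hq]
  have hmm_le : (m * m : ℝ) ≤ m * n :=
    le_of_mul_le_mul_right (by nlinarith [mul_self_nonneg (m : ℝ)]) hq
  have hm1 : m * m = 1 := by
    have hm0 : m ≠ 0 := by rintro rfl; simp at hm; exact hb (by linarith)
    have hlt : m * m < 4 := by exact_mod_cast hmm_le.trans_lt hmn_lt
    obtain ⟨h1, h2⟩ : -2 < m ∧ m < 2 := ⟨by nlinarith, by nlinarith⟩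
    interval_cases m <;> simp_all
  have hm1' : (m * m : ℝ) = 1 := by exact_mod_cast hm1
  refine ⟨m * n, ?_⟩
  rw [eq_intCast, eq_div_iff hq.ne']
  push_cast
  linear_combination p * hm1' - hsq

theorem sum_apply_smul_eq_self_of_apply_eq_ite {K V ι : Type*} [Field K] [AddCommGroup V]
    [Module K V] [FiniteDimensional K V] [Fintype ι] [DecidableEq ι]
    (hdim : finrank K V = Fintype.card ι) (ℓ : ι → Dual K V) (f : ι → V)
    (hℓf : ∀ i j, ℓ j (f i) = if i = j then 1 else 0) (v : V) :
    ∑ i, ℓ i v • f i = v := by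
  have hE : ∀ c : ι → K, LinearMap.pi ℓ (∑ i, c i • f i) = c := fun c => funext fun j => by
    rw [LinearMap.pi_apply, map_sum]
    simp [hℓf]
  have hinj : Function.Injective (LinearMap.pi ℓ) :=
    (LinearMap.injective_iff_surjective_of_finrank_eq_finrank (by simpa using hdim)).mpr
      fun c => ⟨_, hE c⟩
  exact hinj (hE _)

namespace RootSystemData

variable {V : Type} [AddCommGroup V] [Module ℝ V] (D : RootSystemData V)

lemma B_self_pos {α : V} (hα : α ∈ D.roots) : 0 < D.B α α :=
  D.B_pos α (D.root_ne_zero α hα)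

lemma coroot_ne_zero {α : V} (hα : α ∈ D.roots) : D.coroot α ≠ 0 := by
  intro h
  simpa [h] using D.coroot_self α hα

lemma Bd_coroot_self_pos {α : V} (hα : α ∈ D.roots) :
    0 < D.Bd (D.coroot α) (D.coroot α) :=
  D.Bd_pos _ (D.coroot_ne_zero hα)

lemma Bd_coroot_self_mul_coroot_apply_comm {α β : V} (hα : α ∈ D.roots) (hβ : β ∈ D.roots) :
    D.Bd (D.coroot α) (D.coroot α) * D.coroot β α
      = D.Bd (D.coroot β) (D.coroot β) * D.coroot α β := by
  have := (D.Bd_coroot_self_pos hα).ne'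
  have := (D.Bd_coroot_self_pos hβ).ne'
  rw [D.dual_coroot_eq α hα, D.dual_coroot_eq β hβ, D.Bd_symm (D.coroot β) (D.coroot α)]
  field_simp

lemma coroot_apply_eq_of_apply_eq_two_mul_Bd {φ : Module.Dual ℝ V →ₗ[ℝ] V}
    (hφ : ∀ x y : Module.Dual ℝ V, x (φ y) = 2 * D.Bd x y) {α : V} (hα : α ∈ D.roots)
    (x : Module.Dual ℝ V) :
    D.coroot α (φ x) = D.Bd (D.coroot α) (D.coroot α) * x α := by
  have := (D.Bd_coroot_self_pos hα).ne'
  rw [hφ, D.dual_coroot_eq α hα x]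
  field_simp

lemma Bd_coroot_self_mul_B_self_eq_of_B_ne_zero {a b : V} (ha : a ∈ D.roots)
    (hb : b ∈ D.roots) (hab : D.B a b ≠ 0) :
    D.Bd (D.coroot a) (D.coroot a) * D.B a a = D.Bd (D.coroot b) (D.coroot b) * D.B b b := by
  have h := D.Bd_coroot_self_mul_coroot_apply_comm ha hb
  have := (D.B_self_pos ha).ne'
  have := (D.B_self_pos hb).ne'
  rw [D.coroot_eq b hb a, D.coroot_eq a ha b, D.B_symm b a] at h
  field_simp at h
  exact mul_left_cancel₀ hab (by linear_combination D.B a b * h)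

lemma Bd_coroot_self_mul_B_self_eq_of_sameComponent {a b : V} (h : D.SameComponent a b) :
    D.Bd (D.coroot a) (D.coroot a) * D.B a a = D.Bd (D.coroot b) (D.coroot b) * D.B b b := by
  induction h with
  | refl => rfl
  | tail _ hbc ih =>
    exact ih.trans (D.Bd_coroot_self_mul_B_self_eq_of_B_ne_zero hbc.1 hbc.2.1 hbc.2.2)

lemma SameComponent.symm {a b : V} (h : D.SameComponent a b) : D.SameComponent b a := by
  have : Std.Symm fun a b : V => a ∈ D.roots ∧ b ∈ D.roots ∧ D.B a b ≠ 0 :=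
    ⟨fun u v huv => ⟨huv.2.1, huv.1, D.B_symm u v ▸ huv.2.2⟩⟩
  exact Std.Symm.symm (r := Relation.ReflTransGen _) _ _ h

lemma B_reflection_self {b : V} (hb : b ∈ D.roots) (y : V) :
    D.B (y - D.coroot b y • b) (y - D.coroot b y • b) = D.B y y := by
  have := (D.B_self_pos hb).ne'
  simp only [map_sub, map_smul, LinearMap.sub_apply, LinearMap.smul_apply, smul_eq_mul,
    D.coroot_eq b hb y, D.B_symm b y]
  field_simp
  ring

/-- Walk along a chain of non-orthogonal roots `a, …, b, c`: a root `y ⟂ c` that is not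
orthogonal to `b` is replaced by its reflection in `b`, which has the same length and is not
orthogonal to `c`. -/
lemma exists_root_B_self_eq_B_ne_zero {a c : V} (h : D.SameComponent a c) (ha : a ∈ D.roots) :
    ∃ y ∈ D.roots, D.B y y = D.B a a ∧ D.B y c ≠ 0 := by
  induction h with
  | refl => exact ⟨a, ha, rfl, (D.B_self_pos ha).ne'⟩
  | @tail b c _ hbc ih =>
    obtain ⟨y, hy, hyy, hyb⟩ := ih
    by_cases hyc : D.B y c = 0
    · refine ⟨y - D.coroot b y • b, D.reflect_mem b hbc.1 y hy,
        (D.B_reflection_self hbc.1 y).trans hyy, ?_⟩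
      have := (D.B_self_pos hbc.1).ne'
      have : D.coroot b y ≠ 0 := by
        rw [D.coroot_eq b hbc.1, D.B_symm]; exact div_ne_zero (mul_ne_zero two_ne_zero hyb) this
      simpa [hyc] using mul_ne_zero this hbc.2.2
    · exact ⟨y, hy, hyy, hyc⟩

/-- Proportional roots are `±` each other, `R` being reduced. -/
lemma B_self_eq_or_mul_self_lt {y c : V} (hy : y ∈ D.roots) (hc : c ∈ D.roots) :
    D.B y y = D.B c c ∨ D.B y c * D.B y c < D.B y y * D.B c c := by
  have hcc := D.B_self_pos hc
  by_cases hw : D.B c c • y - D.B y c • c = 0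
  · left
    have hyc : y = (D.B y c / D.B c c) • c := by
      rw [div_eq_inv_mul, mul_smul, ← sub_eq_zero.mp hw, inv_smul_smul₀ hcc.ne']
    rcases D.reduced c hc _ (hyc ▸ hy) with ht | ht <;> rw [ht] at hyc <;> simp [hyc]
  · right
    have hpos := D.B_pos _ hw
    have hexp : D.B (D.B c c • y - D.B y c • c) (D.B c c • y - D.B y c • c)
        = D.B c c * (D.B y y * D.B c c - D.B y c * D.B y c) := by
      simp only [map_sub, map_smul, LinearMap.sub_apply, LinearMap.smul_apply, smul_eq_mul,
        D.B_symm c y]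
      ring
    rw [hexp] at hpos
    nlinarith [(mul_pos_iff_of_pos_left hcc).mp hpos]

lemma B_self_div_B_self_mem_range {y c : V} (hy : y ∈ D.roots) (hc : c ∈ D.roots)
    (hyc : D.B y c ≠ 0) (hle : D.B c c ≤ D.B y y) :
    D.B y y / D.B c c ∈ (Int.castRingHom ℝ).range := by
  have hcc := D.B_self_pos hc
  rcases D.B_self_eq_or_mul_self_lt hy hc with heq | hlt
  · exact ⟨1, by simp [heq, hcc.ne']⟩
  obtain ⟨m, hm⟩ := D.crystallographic y hy c hc
  obtain ⟨n, hn⟩ := D.crystallographic c hc y hy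
  rw [D.coroot_eq y hy c, div_eq_iff (D.B_self_pos hy).ne'] at hm
  rw [D.coroot_eq c hc y, div_eq_iff hcc.ne', D.B_symm c y] at hn
  exact div_mem_range_intCast_of_mul_eq_two_mul hcc hyc hle hlt hm.symm hn.symm

lemma exists_shortCoroot_sameComponent {c : V} (hc : c ∈ D.roots) :
    ∃ a, D.ShortCoroot a ∧ D.SameComponent c a := by
  obtain ⟨a, ha, hmin⟩ := (D.roots.filter (D.SameComponent c)).exists_min_image
    (fun γ => D.Bd (D.coroot γ) (D.coroot γ)) ⟨c, Finset.mem_filter.mpr ⟨hc, .refl⟩⟩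
  rw [Finset.mem_filter] at ha
  exact ⟨a, ⟨ha.1, fun γ hγ hcomp => hmin γ (Finset.mem_filter.mpr ⟨hγ, ha.2.trans hcomp⟩)⟩, ha.2⟩

lemma Bd_coroot_self_mem_range (hnorm : D.NormalizedDual) {c : V} (hc : c ∈ D.roots) :
    D.Bd (D.coroot c) (D.coroot c) ∈ (Int.castRingHom ℝ).range := by
  obtain ⟨a, ha, hca⟩ := D.exists_shortCoroot_sameComponent hc
  have hconst := D.Bd_coroot_self_mul_B_self_eq_of_sameComponent hca
  rw [hnorm a ha, one_mul] at hconst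
  have hcc := D.B_self_pos hc
  have hdc : D.Bd (D.coroot c) (D.coroot c) = D.B a a / D.B c c := by
    rw [eq_div_iff hcc.ne', hconst]
  have hle : D.B c c ≤ D.B a a := by
    have := ha.2 c hc hca.symm
    rw [hnorm a ha, hdc, one_le_div hcc] at this
    exact this
  obtain ⟨y, hy, hyy, hyc⟩ := D.exists_root_B_self_eq_B_ne_zero hca.symm ha.1
  rw [hdc, ← hyy]
  exact D.B_self_div_B_self_mem_range hy hc hyc (hyy ▸ hle)

lemma apply_mem_range_of_mem_coweightLattice {x : Module.Dual ℝ V} (hx : x ∈ D.coweightLattice)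
    {v : V} (hv : v ∈ D.rootLattice) : x v ∈ (Int.castRingHom ℝ).range := by
  have : D.rootLattice ≤ (Int.castRingHom ℝ).range.toAddSubgroup.comap x.toAddMonoidHom :=
    (AddSubgroup.closure_le _).mpr fun α hα => by
      obtain ⟨n, hn⟩ := hx α hα
      exact ⟨n, hn.symm⟩
  exact this hv

section

variable (Pi : Finset V) (hlin : LinearIndependent ℝ (fun a : {x // x ∈ Pi} => (a : V)))
  (hspan : Submodule.span ℝ (Pi : Set V) = ⊤) (fw : V → V)
  (hfw : ∀ α ∈ Pi, ∀ β ∈ Pi, D.coroot β (fw α) = if α = β then 1 else 0)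

include hlin hspan hfw

lemma sum_coroot_apply_smul_fw (v : V) : ∑ α ∈ Pi, D.coroot α v • fw α = v := by
  let b := Basis.mk hlin (by rw [Subtype.range_coe_subtype, Finset.setOfPred_mem, hspan])
  have := Module.Finite.of_basis b
  rw [← Finset.sum_coe_sort]
  exact sum_apply_smul_eq_self_of_apply_eq_ite (Module.finrank_eq_card_basis b) _ _
    (fun i j => (hfw i i.2 j j.2).trans (if_congr Subtype.ext_iff.symm rfl rfl)) v

lemma sub_sum_coroot_apply_smul_fw_mem_rootLattice (v : V)
    (hv : ∀ α ∈ Pi, fw α ∈ D.rootLattice → D.coroot α v ∈ (Int.castRingHom ℝ).range) :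
    v - ∑ α ∈ Pi.filter (fun α => fw α ∉ D.rootLattice), D.coroot α v • fw α
      ∈ D.rootLattice := by
  have hsplit := Finset.sum_filter_add_sum_filter_not Pi (fun α => fw α ∈ D.rootLattice)
    (fun α => D.coroot α v • fw α)
  rw [D.sum_coroot_apply_smul_fw Pi hlin hspan fw hfw] at hsplit
  rw [← eq_sub_of_add_eq hsplit]
  refine AddSubgroup.sum_mem _ fun α hα => ?_
  rw [Finset.mem_filter] at hα
  exact smul_mem_of_mem_range_intCast (hv α hα.1 hα.2) hα.2

lemma sum_coroot_apply_smul_Bd_smul_fw_mem_rootLattice (hPi : ∀ α ∈ Pi, α ∈ D.roots)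
    (hnorm : D.NormalizedDual) {β : V} (hβ : β ∈ D.roots) :
    ∑ α ∈ Pi.filter (fun α => fw α ∉ D.rootLattice),
      D.coroot β α • (D.Bd (D.coroot α) (D.coroot α) • fw α) ∈ D.rootLattice := by
  have hcoeff : ∀ α ∈ Pi, D.coroot α (D.Bd (D.coroot β) (D.coroot β) • β)
      = D.coroot β α * D.Bd (D.coroot α) (D.coroot α) := fun α hα => by
    rw [map_smul, smul_eq_mul, ← D.Bd_coroot_self_mul_coroot_apply_comm (hPi α hα) hβ, mul_comm]
  have hsub := D.sub_sum_coroot_apply_smul_fw_mem_rootLattice Pi hlin hspan fw hfw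
    (D.Bd (D.coroot β) (D.coroot β) • β) fun α hα _ => by
      rw [hcoeff α hα]
      obtain ⟨n, hn⟩ := D.crystallographic β hβ α (hPi α hα)
      exact mul_mem ⟨n, hn.symm⟩ (D.Bd_coroot_self_mem_range hnorm (hPi α hα))
  have hdβ : D.Bd (D.coroot β) (D.coroot β) • β ∈ D.rootLattice :=
    smul_mem_of_mem_range_intCast (D.Bd_coroot_self_mem_range hnorm hβ)
      (AddSubgroup.subset_closure hβ)
  have := sub_mem hdβ hsub
  rw [sub_sub_cancel] at this
  convert this using 2 with α hα
  rw [hcoeff α (Finset.mem_filter.mp hα).1, mul_smul]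

lemma sub_sum_apply_smul_Bd_smul_fw_mem_rootLattice (hPi : ∀ α ∈ Pi, α ∈ D.roots)
    (hnorm : D.NormalizedDual) {φ : Module.Dual ℝ V →ₗ[ℝ] V}
    (hφ : ∀ x y : Module.Dual ℝ V, x (φ y) = 2 * D.Bd x y) {x : Module.Dual ℝ V}
    (hx : x ∈ D.coweightLattice) :
    φ x - ∑ α ∈ Pi.filter (fun α => fw α ∉ D.rootLattice),
      x α • (D.Bd (D.coroot α) (D.coroot α) • fw α) ∈ D.rootLattice := by
  have hcoeff : ∀ α ∈ Pi, D.coroot α (φ x) = x α * D.Bd (D.coroot α) (D.coroot α) :=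
    fun α hα => by rw [D.coroot_apply_eq_of_apply_eq_two_mul_Bd hφ (hPi α hα), mul_comm]
  have hsub := D.sub_sum_coroot_apply_smul_fw_mem_rootLattice Pi hlin hspan fw hfw (φ x)
    fun α hα _ => by
      rw [hcoeff α hα]
      obtain ⟨n, hn⟩ := hx α (hPi α hα)
      exact mul_mem ⟨n, hn.symm⟩ (D.Bd_coroot_self_mem_range hnorm (hPi α hα))
  convert hsub using 3 with α hα
  rw [hcoeff α (Finset.mem_filter.mp hα).1, mul_smul]

end

end RootSystemData

-- `(t ∘ φ' ∘ s)(x) = Σ_{α ∈ Π'} ⟨s(x), α⟩ d_α f_α`, as `R'` is simply laced and `φ'(f'_α∨) = f'_α`.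
theorem stmt15_general {V : Type} [AddCommGroup V] [Module ℝ V]
    (D : RootSystemData V)
    (hnormVd : D.NormalizedDual)
    (φ : Module.Dual ℝ V →ₗ[ℝ] V)
    (hφ : ∀ x y : Module.Dual ℝ V, x (φ y) = 2 * D.Bd x y)
    -- a system of simple roots `Π`
    (Pi : Finset V) (hPi : ∀ α ∈ Pi, α ∈ D.roots)
    (hlin : LinearIndependent ℝ (fun a : {x // x ∈ Pi} => (a : V)))
    (hspan : Submodule.span ℝ (Pi : Set V) = ⊤)
    -- the fundamental weights of `R`
    (fw : V → V)
    (hfw : ∀ α ∈ Pi, ∀ β ∈ Pi, D.coroot β (fw α) = if α = β then 1 else 0) :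
    ∀ x ∈ D.coweightLattice,
      (∑ α ∈ Pi.filter (fun α => fw α ∉ D.rootLattice),
          ((x - ∑ β ∈ Pi.filter (fun β => fw β ∈ D.rootLattice),
              x (fw β) • D.coroot β) α)
            • (D.Bd (D.coroot α) (D.coroot α) • fw α))
        - φ x ∈ D.rootLattice := by
  intro x hx
  have hφx := D.sub_sum_apply_smul_Bd_smul_fw_mem_rootLattice Pi hlin hspan fw hfw hPi
    hnormVd hφ hx
  have hswap : ∑ α ∈ Pi.filter (fun α => fw α ∉ D.rootLattice),
      (∑ β ∈ Pi.filter (fun β => fw β ∈ D.rootLattice), x (fw β) • D.coroot β) α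
        • (D.Bd (D.coroot α) (D.coroot α) • fw α)
      = ∑ β ∈ Pi.filter (fun β => fw β ∈ D.rootLattice), x (fw β) •
          ∑ α ∈ Pi.filter (fun α => fw α ∉ D.rootLattice),
            D.coroot β α • (D.Bd (D.coroot α) (D.coroot α) • fw α) := by
    simp only [LinearMap.sum_apply, LinearMap.smul_apply, smul_eq_mul, Finset.sum_smul,
      Finset.smul_sum, mul_smul]
    exact Finset.sum_comm
  simp only [LinearMap.sub_apply, sub_smul, Finset.sum_sub_distrib]
  rw [hswap, sub_right_comm]
  refine sub_mem (sub_mem_comm_iff.mp hφx) (AddSubgroup.sum_mem _ fun β hβ => ?_)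
  rw [Finset.mem_filter] at hβ
  exact smul_mem_of_mem_range_intCast (D.apply_mem_range_of_mem_coweightLattice hx hβ.2)
    (D.sum_coroot_apply_smul_Bd_smul_fw_mem_rootLattice Pi hlin hspan fw hfw hPi hnormVd
      (hPi β hβ.1))

/-- With `Π_r = {α ∈ Π : f_α ∈ Λ_r}`, `Π' = Π \ Π_r`,
`s : Λ_w∨ → Λ'_w∨`, `s(x) = x − Σ_{β ∈ Π_r} ⟨x, f_β⟩ β∨`, and
`t : Λ'_w → Λ_w`, `t(f'_α) = d_α f_α` for `α ∈ Π'`, the image of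
`t ∘ φ' ∘ s − φ` is contained in the root lattice `Λ_r`.  Here
`(t ∘ φ' ∘ s)(x) = Σ_{α ∈ Π'} ⟨s(x), α⟩ · d_α · f_α`, since `R'` is simply
laced and `φ'(f'_α∨) = f'_α`. -/
theorem stmt15 {V : Type} [AddCommGroup V] [Module ℝ V] [FiniteDimensional ℝ V]
    (D : RootSystemData V)
    (hnormV : D.NormalizedPrimal) (hnormVd : D.NormalizedDual)
    (φ : Module.Dual ℝ V →ₗ[ℝ] V)
    (hφ : ∀ x y : Module.Dual ℝ V, x (φ y) = 2 * D.Bd x y)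
    -- a system of simple roots `Π`
    (Pi : Finset V) (hPi : ∀ α ∈ Pi, α ∈ D.roots)
    (hlin : LinearIndependent ℝ (fun a : {x // x ∈ Pi} => (a : V)))
    (hspan : Submodule.span ℝ (Pi : Set V) = ⊤)
    (hgen : ∀ α ∈ D.roots, α ∈ AddSubgroup.closure (Pi : Set V))
    -- the fundamental weights of `R`
    (fw : V → V)
    (hfw : ∀ α ∈ Pi, ∀ β ∈ Pi, D.coroot β (fw α) = if α = β then 1 else 0) :
    ∀ x ∈ D.coweightLattice,
      (∑ α ∈ Pi.filter (fun α => fw α ∉ D.rootLattice),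
          ((x - ∑ β ∈ Pi.filter (fun β => fw β ∈ D.rootLattice),
              x (fw β) • D.coroot β) α)
            • (D.Bd (D.coroot α) (D.coroot α) • fw α))
        - φ x ∈ D.rootLattice :=
  stmt15_general D hnormVd φ hφ Pi hPi hlin hspan fw hfw
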